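/- For every B > 0 there exists K₀ = K₀(B) > 0 such that for every μ ∈ (0,1) and every C ≥ 3μ + K₀·(1−μ)^{2/3} the following holds for any solution (U,V) of the scaled Levi-Civita system and any time τ*: if |U(τ*)| ≤ B and |V(τ*)| ≤ B, and at τ* one has U·U̇ + V·V̇ = 0, U·Ü + U̇² + V·V̈ + V̇² > 0 (a nondegenerate local minimum of the squared distance U²+V² to the origin), and the angular momentum M = U·V̇ − V·U̇ vanishes, then U(τ*) = V(τ*) = 0. Conversely, if U(τ*) = V(τ*) = 0 and U̇(τ*)² + V̇(τ*)² > 0, then all three conditions hold at τ*. -/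

import Mathlib

/-!
Away from the origin, `U U̇ + V V̇ = 0` and `U V̇ - V U̇ = 0` force `U̇ = V̇ = 0`, so at such a point
the second derivative of `(U² + V²)/2` is the radial acceleration at rest `U Ü + V V̈`.
With `k = C - 3μ` and `y = (1-μ)(U² + V²)/k` it equals `(U² + V²)/k · (-k + 12y² + 2μG)`,
where the second primary's term satisfies `G ≤ 24y²` as long as `y ≤ 1/8`. For `|U|, |V| ≤ B`
the choice `K₀ = 16(1+B)²` gives `y ≤ 1/8` and `60y² ≤ k`, so the radial acceleration is
`≤ 0` and the minimum cannot be nondegenerate. At the origin the three conditions reduce to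
`U̇² + V̇² > 0`.
-/

open Real Set

noncomputable section

/-- The function `R₂` appearing in the scaled Levi-Civita system. -/
def R2 (μ C U V : ℝ) : ℝ :=
  Real.sqrt (1 + 4*(1-μ)*(U^2-V^2)/(C-3*μ) + 4*(1-μ)^2*(U^2+V^2)^2/(C-3*μ)^2)

/-- `(U,V)` is a solution of the scaled Levi-Civita system of the planar circular
restricted three-body problem with mass parameter `μ` and Jacobi constant `C`. -/
def IsLCSol (μ C : ℝ) (U V : ℝ → ℝ) : Prop :=
  (∀ τ : ℝ, DifferentiableAt ℝ U τ ∧ DifferentiableAt ℝ V τ ∧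
      DifferentiableAt ℝ (deriv U) τ ∧ DifferentiableAt ℝ (deriv V) τ) ∧
  (∀ τ : ℝ,
    deriv (deriv U) τ =
      -((C-μ)/(C-3*μ)) * U τ
      + 8*(1-μ)*((U τ)^2+(V τ)^2)*(deriv V τ)/Real.sqrt ((C-3*μ)^3)
      + 12*(1-μ)^2*((U τ)^2+(V τ)^2)^2*(U τ)/(C-3*μ)^3
      + 8*μ*(1-μ)*(U τ)^3/(C-3*μ)^2
      + 2*μ*(U τ)/((C-3*μ)*R2 μ C (U τ) (V τ))
      - 4*μ*(1-μ)*(U τ)*((U τ)^2+(V τ)^2)*(2*(1-μ)*((U τ)^2+(V τ)^2)+(C-3*μ))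
          /((C-3*μ)^3*(R2 μ C (U τ) (V τ))^3)) ∧
  (∀ τ : ℝ,
    deriv (deriv V) τ =
      -((C-μ)/(C-3*μ)) * V τ
      - 8*(1-μ)*((U τ)^2+(V τ)^2)*(deriv U τ)/Real.sqrt ((C-3*μ)^3)
      + 12*(1-μ)^2*((U τ)^2+(V τ)^2)^2*(V τ)/(C-3*μ)^3
      - 8*μ*(1-μ)*(V τ)^3/(C-3*μ)^2
      + 2*μ*(V τ)/((C-3*μ)*R2 μ C (U τ) (V τ))
      - 4*μ*(1-μ)*(V τ)*((U τ)^2+(V τ)^2)*(2*(1-μ)*((U τ)^2+(V τ)^2)-(C-3*μ))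
          /((C-3*μ)^3*(R2 μ C (U τ) (V τ))^3))

def lcAccelU (μ C u v v' : ℝ) : ℝ :=
  -((C-μ)/(C-3*μ)) * u
    + 8*(1-μ)*(u^2+v^2)*v'/Real.sqrt ((C-3*μ)^3)
    + 12*(1-μ)^2*(u^2+v^2)^2*u/(C-3*μ)^3
    + 8*μ*(1-μ)*u^3/(C-3*μ)^2
    + 2*μ*u/((C-3*μ)*R2 μ C u v)
    - 4*μ*(1-μ)*u*(u^2+v^2)*(2*(1-μ)*(u^2+v^2)+(C-3*μ))/((C-3*μ)^3*(R2 μ C u v)^3)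

def lcAccelV (μ C u v u' : ℝ) : ℝ :=
  -((C-μ)/(C-3*μ)) * v
    - 8*(1-μ)*(u^2+v^2)*u'/Real.sqrt ((C-3*μ)^3)
    + 12*(1-μ)^2*(u^2+v^2)^2*v/(C-3*μ)^3
    - 8*μ*(1-μ)*v^3/(C-3*μ)^2
    + 2*μ*v/((C-3*μ)*R2 μ C u v)
    - 4*μ*(1-μ)*v*(u^2+v^2)*(2*(1-μ)*(u^2+v^2)-(C-3*μ))/((C-3*μ)^3*(R2 μ C u v)^3)

theorem IsLCSol.deriv_deriv_fst {μ C : ℝ} {U V : ℝ → ℝ} (h : IsLCSol μ C U V) (τ : ℝ) :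
    deriv (deriv U) τ = lcAccelU μ C (U τ) (V τ) (deriv V τ) :=
  h.2.1 τ

theorem IsLCSol.deriv_deriv_snd {μ C : ℝ} {U V : ℝ → ℝ} (h : IsLCSol μ C U V) (τ : ℝ) :
    deriv (deriv V) τ = lcAccelV μ C (U τ) (V τ) (deriv U τ) :=
  h.2.2 τ

theorem velocity_eq_zero_of_radial_eq_zero_of_angular_eq_zero {u v u' v' : ℝ}
    (hpos : u ≠ 0 ∨ v ≠ 0) (hrad : u * u' + v * v' = 0) (hang : u * v' - v * u' = 0) :
    u' = 0 ∧ v' = 0 := by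
  have hs : u ^ 2 + v ^ 2 ≠ 0 := by
    rcases hpos with h | h <;> positivity
  constructor
  · refine (mul_eq_zero.mp ?_).resolve_left hs
    linear_combination u * hrad - v * hang
  · refine (mul_eq_zero.mp ?_).resolve_left hs
    linear_combination v * hrad + u * hang

/-- The second primary's share of the radial acceleration at rest, in the variables
`x = (1-μ)(u²-v²)/k`, `y = (1-μ)(u²+v²)/k` with `k = C - 3μ`, in which `R₂ = √(1 + 4x + 4y²)`. -/
def p2Term (x y R : ℝ) : ℝ := -1 + 4*x + 1/R - (2*x+4*y^2)/R^3

theorem p2Term_le {x y R : ℝ} (hxl : -y ≤ x) (hxu : x ≤ y) (hy : y ≤ 1/8)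
    (hR0 : 0 ≤ R) (hR2 : R^2 = 1+4*x+4*y^2) :
    p2Term x y R ≤ 24*y^2 := by
  have hy0 : 0 ≤ y := by linarith
  have hx2 : x^2 ≤ y^2 := sq_le_sq' hxl hxu
  have hRpos : 0 < R := by nlinarith
  have hR1 : 1+2*x ≤ R := by nlinarith
  have hP1 : (1:ℝ) ≤ (1+4*x+4*y^2)*(1-4*x+24*y^2) := by
    nlinarith [mul_nonneg (mul_nonneg hy0 hy0) (by linarith : (0:ℝ) ≤ x+y),
      mul_nonneg (mul_nonneg hy0 hy0) (by linarith : (0:ℝ) ≤ 1/8-y),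
      mul_nonneg (mul_nonneg hy0 hy0) (mul_nonneg hy0 hy0)]
  have hnum : 1+2*x ≤ R^3*(1-4*x+24*y^2) := by
    have e1 : R^3*(1-4*x+24*y^2) = R*((1+4*x+4*y^2)*(1-4*x+24*y^2)) := by
      rw [← hR2]; ring
    rw [e1]
    nlinarith
  have hsplit : p2Term x y R = 24*y^2 - (R^3*(1-4*x+24*y^2) - (1+2*x))/R^3 := by
    rw [p2Term]
    field_simp
    linear_combination hR2
  rw [hsplit]
  exact sub_le_self _ (div_nonneg (by linarith) (by positivity))

theorem radial_accel_at_rest_eq (μ C u v : ℝ) (hk : C - 3*μ ≠ 0) :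
    u * lcAccelU μ C u v 0 + v * lcAccelV μ C u v 0
      = (u^2+v^2)/(C-3*μ) * (-(C-3*μ) + 12*((1-μ)*(u^2+v^2)/(C-3*μ))^2
          + 2*μ*p2Term ((1-μ)*(u^2-v^2)/(C-3*μ)) ((1-μ)*(u^2+v^2)/(C-3*μ)) (R2 μ C u v)) := by
  simp only [lcAccelU, lcAccelV, p2Term]
  generalize R2 μ C u v = R
  obtain ⟨k, rfl⟩ : ∃ k, C = k + 3*μ := ⟨C - 3*μ, by ring⟩
  rw [add_sub_cancel_right] at hk ⊢
  rw [show k + 3*μ - μ = k + 2*μ by ring]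
  field_simp
  ring

theorem radial_accel_at_rest_nonpos {μ C u v : ℝ} (hμ : μ ∈ Ioo 0 1) (hk : 0 < C - 3*μ)
    (h8 : 8*((1-μ)*(u^2+v^2)) ≤ C - 3*μ) (h60 : 60*((1-μ)*(u^2+v^2))^2 ≤ (C-3*μ)^3) :
    u * lcAccelU μ C u v 0 + v * lcAccelV μ C u v 0 ≤ 0 := by
  obtain ⟨hμ0, hμ1⟩ := hμ
  have hε : 0 < 1 - μ := by linarith
  rw [radial_accel_at_rest_eq μ C u v hk.ne']
  have hR2 : R2 μ C u v ^ 2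
      = 1 + 4*((1-μ)*(u^2-v^2)/(C-3*μ)) + 4*((1-μ)*(u^2+v^2)/(C-3*μ))^2 := by
    have hlin : -(1/2) ≤ 4*(1-μ)*(u^2-v^2)/(C-3*μ) := by
      rw [le_div_iff₀ hk]; nlinarith [mul_nonneg hε.le (sq_nonneg u)]
    have hquad : 0 ≤ 4*(1-μ)^2*(u^2+v^2)^2/(C-3*μ)^2 := by positivity
    rw [R2, sq_sqrt (by linarith)]
    field_simp
  have hR0 : 0 ≤ R2 μ C u v := sqrt_nonneg _
  generalize R2 μ C u v = R at hR0 hR2 ⊢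
  generalize C - 3*μ = k at *
  have hy0 : 0 ≤ (1-μ)*(u^2+v^2)/k := by positivity
  have hxu : (1-μ)*(u^2-v^2)/k ≤ (1-μ)*(u^2+v^2)/k := by
    gcongr; nlinarith [sq_nonneg v]
  have hxl : -((1-μ)*(u^2+v^2)/k) ≤ (1-μ)*(u^2-v^2)/k := by
    rw [← neg_div]; gcongr; nlinarith [sq_nonneg u]
  have hy8 : (1-μ)*(u^2+v^2)/k ≤ 1/8 := by
    rw [div_le_iff₀ hk]; linarith
  have hy60 : 60*((1-μ)*(u^2+v^2)/k)^2 ≤ k := by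
    rw [div_pow, ← mul_div_assoc, div_le_iff₀ (by positivity)]; nlinarith
  generalize (1-μ)*(u^2-v^2)/k = x at *
  generalize (1-μ)*(u^2+v^2)/k = y at *
  have hG := p2Term_le hxl hxu hy8 hR0 hR2
  refine mul_nonpos_of_nonneg_of_nonpos (by positivity) ?_
  nlinarith [mul_le_mul_of_nonneg_left hG hμ0.le, mul_le_mul_of_nonneg_right hμ1.le (sq_nonneg y)]

theorem jacobi_gap_bounds {B μ C u v : ℝ} (hμ : μ ∈ Ioo 0 1)
    (hC : 3*μ + 16*(1+B)^2*(1-μ)^((2:ℝ)/3) ≤ C) (hu : |u| ≤ B) (hv : |v| ≤ B) :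
    0 < C - 3*μ ∧ 8*((1-μ)*(u^2+v^2)) ≤ C - 3*μ ∧ 60*((1-μ)*(u^2+v^2))^2 ≤ (C-3*μ)^3 := by
  obtain ⟨hμ0, hμ1⟩ := hμ
  have hε : 0 < 1 - μ := by linarith
  have hB : 0 ≤ B := (abs_nonneg u).trans hu
  set p := (1-μ)^((2:ℝ)/3)
  have hp : 0 < p := rpow_pos_of_pos hε _
  have hεp : 1 - μ ≤ p := self_le_rpow_of_le_one hε.le (by linarith) (by norm_num)
  have hp3 : p^3 = (1-μ)^2 := by
    rw [← rpow_natCast, ← rpow_mul hε.le]; norm_num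
  have hu2 : u^2 ≤ B^2 := by rw [← sq_abs]; exact pow_le_pow_left₀ (abs_nonneg u) hu 2
  have hv2 : v^2 ≤ B^2 := by rw [← sq_abs]; exact pow_le_pow_left₀ (abs_nonneg v) hv 2
  have hs : u^2 + v^2 ≤ 2*B^2 := by linarith
  have hK3 : 240*B^4 ≤ (16*(1+B)^2)^3 := by
    nlinarith [pow_le_pow_left₀ hB (by linarith : B ≤ 1+B) 4]
  have hs2 : (u^2+v^2)^2 ≤ 4*B^4 := by nlinarith [sq_nonneg (u^2+v^2)]
  have hgap : 16*(1+B)^2*p ≤ C - 3*μ := by linarith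
  refine ⟨lt_of_lt_of_le (by positivity) hgap, ?_, ?_⟩
  · calc 8*((1-μ)*(u^2+v^2)) ≤ 16*B^2*p := by nlinarith
      _ ≤ 16*(1+B)^2*p := by gcongr; linarith
      _ ≤ C - 3*μ := hgap
  · calc 60*((1-μ)*(u^2+v^2))^2 ≤ 240*B^4*p^3 := by
          rw [hp3, mul_pow]; nlinarith [mul_le_mul_of_nonneg_left hs2 (sq_nonneg (1-μ))]
      _ ≤ (16*(1+B)^2*p)^3 := by rw [mul_pow]; gcongr
      _ ≤ (C-3*μ)^3 := by gcongr

/-- **Lemma (characterization of EC orbits)**: for `C` large enough (in the sense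
`C ≥ 3μ + K₀(1−μ)^{2/3}`), at a nondegenerate local minimum of the squared distance to the
origin at which the angular momentum `M = U V̇ − V U̇` vanishes, the solution is exactly at
the origin (collision); conversely, at a collision with nonzero velocity all three
conditions hold. The constant `K₀` can be chosen uniformly for solutions bounded by `B`. -/
theorem collision_characterization :
    ∀ B : ℝ, 0 < B → ∃ K₀ : ℝ, 0 < K₀ ∧ ∀ μ ∈ Set.Ioo (0:ℝ) 1,
      ∀ C : ℝ, 3*μ + K₀*(1-μ)^((2:ℝ)/3) ≤ C →
      ∀ U V : ℝ → ℝ, IsLCSol μ C U V → ∀ τ : ℝ,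
        ((|U τ| ≤ B ∧ |V τ| ≤ B ∧
            U τ * deriv U τ + V τ * deriv V τ = 0 ∧
            0 < U τ * deriv (deriv U) τ + (deriv U τ)^2
                + V τ * deriv (deriv V) τ + (deriv V τ)^2 ∧
            U τ * deriv V τ - V τ * deriv U τ = 0) →
          U τ = 0 ∧ V τ = 0) ∧
        ((U τ = 0 ∧ V τ = 0 ∧ 0 < (deriv U τ)^2 + (deriv V τ)^2) →
          (U τ * deriv U τ + V τ * deriv V τ = 0 ∧
            0 < U τ * deriv (deriv U) τ + (deriv U τ)^2
                + V τ * deriv (deriv V) τ + (deriv V τ)^2 ∧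
            U τ * deriv V τ - V τ * deriv U τ = 0)) := by
  intro B hB
  refine ⟨16*(1+B)^2, by positivity, fun μ hμ C hC U V hsol τ => ⟨?_, ?_⟩⟩
  · rintro ⟨hUB, hVB, hrad, hmin, hang⟩
    by_contra hne
    obtain ⟨hdU, hdV⟩ :=
      velocity_eq_zero_of_radial_eq_zero_of_angular_eq_zero (not_and_or.mp hne) hrad hang
    obtain ⟨hk, h8, h60⟩ := jacobi_gap_bounds hμ hC hUB hVB
    have hrest := radial_accel_at_rest_nonpos hμ hk h8 h60
    rw [hsol.deriv_deriv_fst, hsol.deriv_deriv_snd, hdU, hdV] at hmin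
    linarith
  · rintro ⟨hU, hV, hvel⟩
    refine ⟨by simp [hU, hV], by simpa [hU, hV] using hvel, by simp [hU, hV]⟩

end
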